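/- Suppose each f_i is convex with L_i-Lipschitz gradient, L = max_i L_i, and set L' = L·λ_max(𝕃), where λ_max(𝕃) is the largest eigenvalue of 𝕃. Let (x*, q*) satisfy x* − r + c Uᵀ q* = 0 and U ∇f(x*) = 0. Then any Mirror-EXTRA trajectory (x^k, q^k) satisfies, for all k ≥ 0, c‖q^{k+1} − q*‖_F² + (2/L' − c)‖∇f(x^{k+1}) − ∇f(x*)‖_𝕃² ≤ c‖q^k − q*‖_F² − c‖q^k − q^{k+1}‖_F² − c‖∇f(x^k) − ∇f(x*)‖_𝕃² + c‖∇f(x^k) − ∇f(x^{k+1})‖_𝕃². -/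

import Mathlib

open Matrix

noncomputable section

/-- Squared Frobenius norm. -/
def frobSq {m p : ℕ} (A : Matrix (Fin m) (Fin p) ℝ) : ℝ := ∑ i, ∑ j, (A i j) ^ 2

/-- Squared `P`-weighted seminorm `⟨A, P A⟩ = tr(Aᵀ P A)`. -/
def wSq {m p : ℕ} (P : Matrix (Fin m) (Fin m) ℝ) (A : Matrix (Fin m) (Fin p) ℝ) : ℝ :=
  Matrix.trace (Aᵀ * P * A)

/-- Squared Euclidean norm of a vector. -/
def enormSq {p : ℕ} (u : Fin p → ℝ) : ℝ := ∑ j, (u j) ^ 2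

/-- The matrix whose `i`-th row is `∇fᵢ(xᵢ)`, given the gradient maps `g i`. -/
def gradMat {n p : ℕ} (g : Fin n → (Fin p → ℝ) → (Fin p → ℝ))
    (x : Matrix (Fin n) (Fin p) ℝ) : Matrix (Fin n) (Fin p) ℝ :=
  Matrix.of fun i => g i (x i)

/-!
Baillon–Haddad co-coercivity of the gradient of a convex `L`-smooth function, applied row by row,
gives `‖D‖_F² ≤ L ⟨x^{k+1} - x*, D⟩` for `D = ∇f(x^{k+1}) - ∇f(x*)`, and the Rayleigh bound
`‖D‖_𝕃² ≤ λ_max(𝕃) ‖D‖_F²` turns this into `(2 / L') ‖D‖_𝕃² ≤ 2 ⟨x^{k+1} - x*, D⟩`.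
Subtracting the optimality conditions from the recursions writes `x^{k+1} - x*` as `Uᵀ` applied
to `c (q^{k+1} - q^k - U ∇f(x^k)) - c (q^{k+1} - q*)`, and `U D = q^{k+1} - q^k`. Moving `Uᵀ`
across the inner product and polarizing, the claim becomes exactly that inequality.
-/

open Set AffineMap
open scoped RealInnerProductSpace

section Cocoercive

variable {H : Type*} [NormedAddCommGroup H] [InnerProductSpace ℝ H] [CompleteSpace H]
  {F : H → ℝ} {G : H → H}

theorem HasGradientAt.hasDerivAt_comp_lineMap {g u w : H} {t : ℝ}
    (h : HasGradientAt F g (lineMap u w t)) :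
    HasDerivAt (fun s : ℝ => F (lineMap u w s)) ⟪g, w - u⟫ t :=
  (hasGradientAt_iff_hasFDerivAt.mp h).comp_hasDerivAt t hasDerivAt_lineMap

theorem ConvexOn.add_inner_gradient_le (hF : ∀ u, HasGradientAt F (G u) u)
    (hc : ConvexOn ℝ univ F) (u w : H) : F u + ⟪G u, w - u⟫ ≤ F w := by
  have hd := (hF (lineMap u w (0 : ℝ))).hasDerivAt_comp_lineMap
  have := (hc.comp_affineMap (lineMap u w)).le_slope_of_hasDerivAt (mem_univ 0) (mem_univ 1)
    one_pos hd
  simp only [slope_def_field, Function.comp_apply, lineMap_apply_zero, lineMap_apply_one,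
    sub_zero, div_one] at this
  linarith

theorem le_add_inner_gradient_add_sq_of_lipschitz (hF : ∀ u, HasGradientAt F (G u) u) {L : ℝ}
    (hlip : ∀ a b, ‖G a - G b‖ ≤ L * ‖a - b‖) (u w : H) :
    F w ≤ F u + ⟪G u, w - u⟫ + L / 2 * ‖w - u‖ ^ 2 := by
  set ψ : ℝ → ℝ :=
    fun t => F (lineMap u w t) - t * ⟪G u, w - u⟫ - L / 2 * t ^ 2 * ‖w - u‖ ^ 2
  have hψ : ∀ t, HasDerivAt ψ (⟪G (lineMap u w t) - G u, w - u⟫ - L * t * ‖w - u‖ ^ 2) t := by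
    intro t
    have := (((hF (lineMap u w t)).hasDerivAt_comp_lineMap).sub
      ((hasDerivAt_id t).mul_const ⟪G u, w - u⟫)).sub
      (((hasDerivAt_pow 2 t).const_mul (L / 2)).mul_const (‖w - u‖ ^ 2))
    exact this.congr_deriv (by
      rw [inner_sub_left, Nat.add_one_sub_one, pow_one]; push_cast; ring)
  have hslope : ∀ t ∈ interior (Ici (0 : ℝ)),
      ⟪G (lineMap u w t) - G u, w - u⟫ - L * t * ‖w - u‖ ^ 2 ≤ 0 := by
    intro t ht
    rw [interior_Ici, mem_Ioi] at ht
    have hdist : ‖lineMap u w t - u‖ = t * ‖w - u‖ := by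
      rw [← vsub_eq_sub, lineMap_vsub_left, norm_smul, Real.norm_of_nonneg ht.le, vsub_eq_sub]
    refine sub_nonpos.mpr ?_
    calc ⟪G (lineMap u w t) - G u, w - u⟫
        ≤ ‖G (lineMap u w t) - G u‖ * ‖w - u‖ := real_inner_le_norm _ _
      _ ≤ L * ‖lineMap u w t - u‖ * ‖w - u‖ := by gcongr; exact hlip _ _
      _ = L * t * ‖w - u‖ ^ 2 := by rw [hdist]; ring
  have hanti : AntitoneOn ψ (Ici 0) :=
    antitoneOn_of_hasDerivWithinAt_nonpos (convex_Ici 0)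
      (fun t _ => (hψ t).continuousAt.continuousWithinAt)
      (fun t _ => (hψ t).hasDerivWithinAt) hslope
  have := hanti (mem_Ici.mpr le_rfl) (mem_Ici.mpr zero_le_one) zero_le_one
  simp only [ψ, lineMap_apply_zero, lineMap_apply_one] at this
  linarith

theorem ConvexOn.sq_norm_sub_gradient_le (hF : ∀ u, HasGradientAt F (G u) u)
    (hc : ConvexOn ℝ univ F) {L : ℝ} (hL : 0 < L) (hlip : ∀ a b, ‖G a - G b‖ ≤ L * ‖a - b‖)
    (a b : H) : ‖G a - G b‖ ^ 2 ≤ L * ⟪a - b, G a - G b⟫ := by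
  -- evaluate both first-order bounds at the gradient step `x - (G x - G y) / L`
  have half : ∀ x y : H, F y + ⟪G y, x - y⟫ + 1 / (2 * L) * ‖G x - G y‖ ^ 2 ≤ F x := by
    intro x y
    set d := G x - G y
    have hlow := hc.add_inner_gradient_le hF y (x - L⁻¹ • d)
    have hup := le_add_inner_gradient_add_sq_of_lipschitz hF hlip x (x - L⁻¹ • d)
    have hx : x - L⁻¹ • d - x = -(L⁻¹ • d) := by abel
    have hy : x - L⁻¹ • d - y = (x - y) - L⁻¹ • d := by abel
    rw [hx, norm_neg, norm_smul, inner_neg_right, real_inner_smul_right] at hup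
    rw [hy, inner_sub_right, real_inner_smul_right] at hlow
    have hd : ⟪G x, d⟫ - ⟪G y, d⟫ = ‖d‖ ^ 2 := by
      rw [← inner_sub_left, real_inner_self_eq_norm_sq]
    rw [Real.norm_of_nonneg (inv_nonneg.mpr hL.le)] at hup
    have h1 : L / 2 * (L⁻¹ * ‖d‖) ^ 2 = 1 / (2 * L) * ‖d‖ ^ 2 := by field_simp
    have h2 : L⁻¹ * ⟪G x, d⟫ - L⁻¹ * ⟪G y, d⟫ = 2 * (1 / (2 * L) * ‖d‖ ^ 2) := by
      rw [← mul_sub, hd]; field_simp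
    linarith
  have hab := half a b
  have hba := half b a
  rw [norm_sub_rev (G b)] at hba
  have hsym : ⟪G a, b - a⟫ + ⟪G b, a - b⟫ = -⟪a - b, G a - G b⟫ := by
    simp only [inner_sub_left, inner_sub_right, real_inner_comm a, real_inner_comm b]
    ring
  have : ‖G a - G b‖ ^ 2 / L ≤ ⟪a - b, G a - G b⟫ := by
    have : 1 / (2 * L) * ‖G a - G b‖ ^ 2 * 2 = ‖G a - G b‖ ^ 2 / L := by field_simp
    linarith
  rwa [div_le_iff₀' hL] at this

end Cocoercive

theorem enormSq_eq_norm_sq {p : ℕ} (u : Fin p → ℝ) : enormSq u = ‖WithLp.toLp 2 u‖ ^ 2 := by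
  simp [enormSq, EuclideanSpace.norm_sq_eq]

theorem ConvexOn.enormSq_sub_le_mul_sum {p : ℕ} {F : (Fin p → ℝ) → ℝ}
    {G : (Fin p → ℝ) → Fin p → ℝ}
    (hF : ∀ u : Fin p → ℝ,
      HasGradientAt (fun v : EuclideanSpace ℝ (Fin p) => F ((WithLp.equiv 2 (Fin p → ℝ)) v))
        ((WithLp.equiv 2 (Fin p → ℝ)).symm (G u)) ((WithLp.equiv 2 (Fin p → ℝ)).symm u))
    (hc : ConvexOn ℝ univ F) {L : ℝ} (hL : 0 < L)
    (hlip : ∀ u v, enormSq (G u - G v) ≤ L ^ 2 * enormSq (u - v)) (a b : Fin p → ℝ) :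
    enormSq (G a - G b) ≤ L * ∑ j, (a j - b j) * (G a j - G b j) := by
  set G' : EuclideanSpace ℝ (Fin p) → EuclideanSpace ℝ (Fin p) :=
    fun v => WithLp.toLp 2 (G v.ofLp)
  have hlip' : ∀ u v, ‖G' u - G' v‖ ≤ L * ‖u - v‖ := by
    intro u v
    rw [← pow_le_pow_iff_left₀ (norm_nonneg _) (by positivity) two_ne_zero, mul_pow]
    simpa [G', enormSq_eq_norm_sq] using hlip u.ofLp v.ofLp
  have hc' := hc.comp_linearMap (WithLp.linearEquiv 2 ℝ (Fin p → ℝ)).toLinearMap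
  have := hc'.sq_norm_sub_gradient_le (fun v => hF v.ofLp) hL hlip' (WithLp.toLp 2 a)
    (WithLp.toLp 2 b)
  simpa [G', enormSq_eq_norm_sq, PiLp.inner_apply, mul_comm] using this

theorem Matrix.IsHermitian.dotProduct_mulVec_le {ι : Type*} [Fintype ι] [DecidableEq ι]
    {M : Matrix ι ι ℝ} (hM : M.IsHermitian) {μ : ℝ}
    (hμ : ∀ (ν : ℝ) (v : ι → ℝ), v ≠ 0 → M *ᵥ v = ν • v → ν ≤ μ) (v : ι → ℝ) :
    v ⬝ᵥ M *ᵥ v ≤ μ * (v ⬝ᵥ v) := by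
  have hB : (μ • 1 - M).IsHermitian := (isHermitian_one.smul (IsSelfAdjoint.all μ)).sub hM
  have hpsd : (μ • 1 - M).PosSemidef := by
    refine hB.posSemidef_iff_eigenvalues_nonneg.mpr fun i => ?_
    have hv := hB.mulVec_eigenvectorBasis i
    have hne : ⇑(hB.eigenvectorBasis i) ≠ 0 := fun h =>
      (hB.eigenvectorBasis.orthonormal.ne_zero i) (by simpa using congrArg (WithLp.toLp 2) h)
    have := hμ (μ - hB.eigenvalues i) _ hne (by
      rw [sub_mulVec, smul_mulVec, one_mulVec] at hv
      rw [sub_smul, ← hv]; abel)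
    simpa using this
  have := hpsd.dotProduct_mulVec_nonneg v
  simp only [star_trivial, sub_mulVec, smul_mulVec, one_mulVec, dotProduct_sub,
    dotProduct_smul, smul_eq_mul] at this
  linarith

theorem wSq_le_mul_frobSq {m p : ℕ} {M : Matrix (Fin m) (Fin m) ℝ} (hM : M.IsHermitian) {μ : ℝ}
    (hμ : ∀ (ν : ℝ) (v : Fin m → ℝ), v ≠ 0 → M *ᵥ v = ν • v → ν ≤ μ)
    (A : Matrix (Fin m) (Fin p) ℝ) : wSq M A ≤ μ * frobSq A := by
  have hw : wSq M A = ∑ j, Aᵀ j ⬝ᵥ M *ᵥ Aᵀ j := by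
    rw [wSq, Matrix.mul_assoc]
    rfl
  have hf : frobSq A = ∑ j, Aᵀ j ⬝ᵥ Aᵀ j := by
    simp only [frobSq, dotProduct, transpose_apply, sq]
    exact Finset.sum_comm
  rw [hw, hf, Finset.mul_sum]
  exact Finset.sum_le_sum fun j _ => hM.dotProduct_mulVec_le hμ _

theorem frobSq_nonneg {m p : ℕ} (A : Matrix (Fin m) (Fin p) ℝ) : 0 ≤ frobSq A := by
  unfold frobSq
  positivity

def frobInner {m p : ℕ} (A B : Matrix (Fin m) (Fin p) ℝ) : ℝ := ∑ i, ∑ j, A i j * B i j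

theorem frobInner_eq_trace {m p : ℕ} (A B : Matrix (Fin m) (Fin p) ℝ) :
    frobInner A B = trace (Aᵀ * B) := by
  simp only [frobInner, trace, diag, mul_apply, transpose_apply]
  exact Finset.sum_comm

theorem frobSq_eq_trace {m p : ℕ} (A : Matrix (Fin m) (Fin p) ℝ) :
    frobSq A = trace (Aᵀ * A) := by
  rw [← frobInner_eq_trace]
  simp only [frobSq, frobInner, sq]

theorem frobInner_transpose_mul_left {k m p : ℕ} (M : Matrix (Fin k) (Fin m) ℝ)
    (Y : Matrix (Fin k) (Fin p) ℝ) (A : Matrix (Fin m) (Fin p) ℝ) :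
    frobInner (Mᵀ * Y) A = frobInner Y (M * A) := by
  rw [frobInner_eq_trace, frobInner_eq_trace, transpose_mul, transpose_transpose,
    Matrix.mul_assoc]

theorem wSq_transpose_mul_self {k m p : ℕ} (M : Matrix (Fin k) (Fin m) ℝ)
    (A : Matrix (Fin m) (Fin p) ℝ) : wSq (Mᵀ * M) A = frobSq (M * A) := by
  rw [wSq, frobSq_eq_trace, transpose_mul, Matrix.mul_assoc, Matrix.mul_assoc,
    Matrix.mul_assoc]

theorem frobSq_gradMat_sub_le {n p : ℕ} {g : Fin n → (Fin p → ℝ) → Fin p → ℝ} {Li : Fin n → ℝ}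
    {L : ℝ} (hLi : ∀ i, 0 < Li i) (hLiL : ∀ i, Li i ≤ L)
    (hrow : ∀ i (a b : Fin p → ℝ),
      enormSq (g i a - g i b) ≤ Li i * ∑ j, (a j - b j) * (g i a j - g i b j))
    (x y : Matrix (Fin n) (Fin p) ℝ) :
    frobSq (gradMat g x - gradMat g y) ≤ L * frobInner (x - y) (gradMat g x - gradMat g y) := by
  rw [frobSq, frobInner, Finset.mul_sum]
  refine Finset.sum_le_sum fun i _ => ?_
  have h := hrow i (x i) (y i)
  have hs : 0 ≤ ∑ j, (x i j - y i j) * (g i (x i) j - g i (y i) j) :=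
    (mul_nonneg_iff_of_pos_left (hLi i)).mp ((Finset.sum_nonneg fun j _ => sq_nonneg _).trans h)
  exact h.trans (mul_le_mul_of_nonneg_right (hLiL i) hs)

theorem frobSq_extra_identity {m p : ℕ} (c : ℝ) (q₀ q₁ q' b : Matrix (Fin m) (Fin p) ℝ) :
    2 * frobInner (c • (q₁ - q₀ - b) - c • (q₁ - q')) (q₁ - q₀) + c * frobSq (q₁ - q')
      - c * frobSq (q₁ - q₀) =
    c * frobSq (q₀ - q') - c * frobSq (q₀ - q₁) - c * frobSq b + c * frobSq (b - (q₁ - q₀)) := by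
  simp only [frobInner, frobSq, Finset.mul_sum, ← Finset.sum_add_distrib,
    ← Finset.sum_sub_distrib]
  refine Finset.sum_congr rfl fun i _ => Finset.sum_congr rfl fun j _ => ?_
  simp only [Matrix.sub_apply, Matrix.smul_apply, smul_eq_mul]
  ring

theorem div_mul_le_of_le_mul_of_le_mul {w μ F L M : ℝ} (hw : 0 ≤ w) (hF : 0 ≤ F) (hL : 0 < L)
    (hwF : w ≤ μ * F) (hFM : F ≤ L * M) : w / (L * μ) ≤ M := by
  have hwμ : w / μ ≤ F := by
    rcases le_or_gt μ 0 with hμ | hμ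
    · -- for `μ ≤ 0` the hypotheses force `w = 0`, so the junk value of `w / μ` does not matter
      have : w = 0 := le_antisymm (hwF.trans (mul_nonpos_of_nonpos_of_nonneg hμ hF)) hw
      simpa [this] using hF
    · exact div_le_of_le_mul₀ hμ.le hF (by linarith)
  rw [mul_comm, ← div_div, div_le_iff₀ hL]
  linarith

theorem sub_eq_transpose_mul_of_extra_step {n m p : ℕ} (U : Matrix (Fin m) (Fin n) ℝ) (c : ℝ)
    {x₁ x' r G₀ G₁ : Matrix (Fin n) (Fin p) ℝ} {q₀ q₁ q' : Matrix (Fin m) (Fin p) ℝ}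
    (hstep : x₁ - r + c • (Uᵀ * q₁) - c • ((Uᵀ * U) * (G₁ - G₀)) = 0)
    (hopt : x' - r + c • (Uᵀ * q') = 0) (hq : U * G₁ = q₁ - q₀) :
    x₁ - x' = Uᵀ * (c • (q₁ - q₀ - U * G₀) - c • (q₁ - q')) := by
  rw [← hq]
  simp only [Matrix.mul_sub, Matrix.mul_smul, Matrix.mul_assoc] at hstep ⊢
  linear_combination (norm := module) hstep - hopt

theorem stmt_14_general (n p : ℕ)
    (U : Matrix (Fin (n - 1)) (Fin n) ℝ)
    (r : Matrix (Fin n) (Fin p) ℝ)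
    (f : Fin n → (Fin p → ℝ) → ℝ)
    (g : Fin n → (Fin p → ℝ) → (Fin p → ℝ))
    -- each `fᵢ` is differentiable with gradient `g i`
    (hgrad : ∀ i (u : Fin p → ℝ),
      HasGradientAt (fun v : EuclideanSpace ℝ (Fin p) => f i ((WithLp.equiv 2 (Fin p → ℝ)) v))
        ((WithLp.equiv 2 (Fin p → ℝ)).symm (g i u))
        ((WithLp.equiv 2 (Fin p → ℝ)).symm u))
    -- each `fᵢ` is convex
    (hconv : ∀ i, ConvexOn ℝ Set.univ (f i))
    (Li : Fin n → ℝ) (hLpos : ∀ i, 0 < Li i)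
    -- each `∇fᵢ` is `Lᵢ`-Lipschitz
    (hlip : ∀ i (u v : Fin p → ℝ), enormSq (g i u - g i v) ≤ (Li i) ^ 2 * enormSq (u - v))
    -- `L = maxᵢ Lᵢ`
    (L : ℝ) (hL : IsGreatest (Set.range Li) L)
    -- `λ_max(𝕃)`: the largest eigenvalue of `𝕃 = UᵀU`
    (lmax : ℝ)
    (hlmax_max : ∀ (ν : ℝ) (v : Fin n → ℝ), v ≠ 0 → (Uᵀ * U).mulVec v = ν • v → ν ≤ lmax)
    (c : ℝ)
    -- the optimal pair `(x*, q*)`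
    (xs : Matrix (Fin n) (Fin p) ℝ) (qs : Matrix (Fin (n - 1)) (Fin p) ℝ)
    (hopt1 : xs - r + c • (Uᵀ * qs) = 0)
    (hopt2 : U * gradMat g xs = 0)
    -- a Mirror-EXTRA trajectory
    (x : ℕ → Matrix (Fin n) (Fin p) ℝ) (q : ℕ → Matrix (Fin (n - 1)) (Fin p) ℝ)
    (hrec1 : ∀ k : ℕ,
      x (k + 1) - r + c • (Uᵀ * q (k + 1))
        - c • ((Uᵀ * U) * (gradMat g (x (k + 1)) - gradMat g (x k))) = 0)
    (hrec2 : ∀ k : ℕ, q (k + 1) = q k + U * gradMat g (x (k + 1))) :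
    ∀ k : ℕ,
      c * frobSq (q (k + 1) - qs)
        + (2 / (L * lmax) - c) * wSq (Uᵀ * U) (gradMat g (x (k + 1)) - gradMat g xs) ≤
      c * frobSq (q k - qs)
        - c * frobSq (q k - q (k + 1))
        - c * wSq (Uᵀ * U) (gradMat g (x k) - gradMat g xs)
        + c * wSq (Uᵀ * U) (gradMat g (x k) - gradMat g (x (k + 1))) := by
  intro k
  set G₀ := gradMat g (x k)
  set G₁ := gradMat g (x (k + 1))
  have hL₀ : 0 < L := by
    obtain ⟨i, hi⟩ := hL.1
    exact hi ▸ hLpos i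
  have hUG₁ : U * G₁ = q (k + 1) - q k := by rw [hrec2 k]; abel
  have hUD : U * (G₁ - gradMat g xs) = q (k + 1) - q k := by
    rw [Matrix.mul_sub, hopt2, sub_zero, hUG₁]
  have hX := sub_eq_transpose_mul_of_extra_step U c (hrec1 k) hopt1 hUG₁
  have hcoco := frobSq_gradMat_sub_le hLpos (fun i => hL.2 ⟨i, rfl⟩)
    (fun i => (hconv i).enormSq_sub_le_mul_sum (hgrad i) (hLpos i) (hlip i)) (x (k + 1)) xs
  have hsymm : (Uᵀ * U).IsHermitian := by simpa using isHermitian_conjTranspose_mul_self U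
  have hspec := wSq_le_mul_frobSq hsymm hlmax_max (G₁ - gradMat g xs)
  have hstep := div_mul_le_of_le_mul_of_le_mul
    (by rw [wSq_transpose_mul_self]; exact frobSq_nonneg _) (frobSq_nonneg _) hL₀ hspec hcoco
  rw [hX, frobInner_transpose_mul_left, hUD, wSq_transpose_mul_self, hUD] at hstep
  have hG₀ : U * (G₀ - gradMat g xs) = U * G₀ := by rw [Matrix.mul_sub, hopt2, sub_zero]
  have hG₀₁ : U * (G₀ - G₁) = U * G₀ - (q (k + 1) - q k) := by rw [Matrix.mul_sub, hUG₁]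
  rw [wSq_transpose_mul_self, wSq_transpose_mul_self, wSq_transpose_mul_self, hUD, hG₀, hG₀₁]
  have hid := frobSq_extra_identity c (q k) (q (k + 1)) qs (U * G₀)
  have hdiv : 2 / (L * lmax) * frobSq (q (k + 1) - q k)
      = 2 * (frobSq (q (k + 1) - q k) / (L * lmax)) := by ring
  linarith

/-- Key descent inequality for Mirror-EXTRA (inequality (32) in the proof of
Theorem 4), with `L' = L λ_max(𝕃)`. -/
theorem stmt_14 (n p : ℕ) (hn : 2 ≤ n) (hp : 1 ≤ p)
    (U : Matrix (Fin (n - 1)) (Fin n) ℝ)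
    (hU : ∀ v : Fin n → ℝ, U.mulVec v = 0 ↔ ∃ a : ℝ, v = fun _ => a)
    (r : Matrix (Fin n) (Fin p) ℝ)
    (f : Fin n → (Fin p → ℝ) → ℝ)
    (g : Fin n → (Fin p → ℝ) → (Fin p → ℝ))
    -- each `fᵢ` is differentiable with gradient `g i`
    (hgrad : ∀ i (u : Fin p → ℝ),
      HasGradientAt (fun v : EuclideanSpace ℝ (Fin p) => f i ((WithLp.equiv 2 (Fin p → ℝ)) v))
        ((WithLp.equiv 2 (Fin p → ℝ)).symm (g i u))
        ((WithLp.equiv 2 (Fin p → ℝ)).symm u))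
    -- each `fᵢ` is convex
    (hconv : ∀ i, ConvexOn ℝ Set.univ (f i))
    (Li : Fin n → ℝ) (hLpos : ∀ i, 0 < Li i)
    -- each `∇fᵢ` is `Lᵢ`-Lipschitz
    (hlip : ∀ i (u v : Fin p → ℝ), enormSq (g i u - g i v) ≤ (Li i) ^ 2 * enormSq (u - v))
    -- `L = maxᵢ Lᵢ`
    (L : ℝ) (hL : IsGreatest (Set.range Li) L)
    -- `λ_max(𝕃)`: the largest eigenvalue of `𝕃 = UᵀU`
    (lmax : ℝ)
    (hlmax_eig : ∃ v : Fin n → ℝ, v ≠ 0 ∧ (Uᵀ * U).mulVec v = lmax • v)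
    (hlmax_max : ∀ (ν : ℝ) (v : Fin n → ℝ), v ≠ 0 → (Uᵀ * U).mulVec v = ν • v → ν ≤ lmax)
    (c : ℝ) (hc : 0 < c)
    -- the optimal pair `(x*, q*)`
    (xs : Matrix (Fin n) (Fin p) ℝ) (qs : Matrix (Fin (n - 1)) (Fin p) ℝ)
    (hopt1 : xs - r + c • (Uᵀ * qs) = 0)
    (hopt2 : U * gradMat g xs = 0)
    -- a Mirror-EXTRA trajectory
    (x : ℕ → Matrix (Fin n) (Fin p) ℝ) (q : ℕ → Matrix (Fin (n - 1)) (Fin p) ℝ)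
    (hrec1 : ∀ k : ℕ,
      x (k + 1) - r + c • (Uᵀ * q (k + 1))
        - c • ((Uᵀ * U) * (gradMat g (x (k + 1)) - gradMat g (x k))) = 0)
    (hrec2 : ∀ k : ℕ, q (k + 1) = q k + U * gradMat g (x (k + 1))) :
    ∀ k : ℕ,
      c * frobSq (q (k + 1) - qs)
        + (2 / (L * lmax) - c) * wSq (Uᵀ * U) (gradMat g (x (k + 1)) - gradMat g xs) ≤
      c * frobSq (q k - qs)
        - c * frobSq (q k - q (k + 1))
        - c * wSq (Uᵀ * U) (gradMat g (x k) - gradMat g xs)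
        + c * wSq (Uᵀ * U) (gradMat g (x k) - gradMat g (x (k + 1))) :=
  stmt_14_general n p U r f g hgrad hconv Li hLpos hlip L hL lmax hlmax_max c xs qs hopt1 hopt2 x q
    hrec1 hrec2
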